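/- Let (p₁, A₁⁺, A₁⁻, Φ₁⁺, Φ₁⁻) and (p₂, A₂⁺, A₂⁻, Φ₂⁺, Φ₂⁻) be two coordinate quasi-Codazzi setups on the same U, and let F⁺, F⁻ : U → (ℝⁿ →ₗ[ℝ] ℝⁿ) be smooth maps with F± x invertible for every x, such that: (i) F± x ∘ Φ₁± x = Φ₂± x for all x; (ii) p₁ x a b = p₂ x (F⁺ x a) (F⁻ x b) for all x, a, b; (iii) for every smooth section ν : U → ℝⁿ and vector field X, F±((∇₁±_X ν)) = ∇₂±_X(F±ν), where (F±ν)(x) := F± x (ν x). Then: (1) F⁺ x ∘ R_{A₁⁺}(x)(v,w) = R_{A₂⁺}(x)(v,w) ∘ F⁺ x and F⁻ x ∘ R_{A₁⁻}(x)(v,w) = R_{A₂⁻}(x)(v,w) ∘ F⁻ x for all x, v, w; (2) h₁ x y z = h₂ x y z for all x, y, z; (3) C₁(X,Y,Z) = C₂(X,Y,Z) for all smooth vector fields X, Y, Z. (Paper's Proposition 3.24: invariants of isomorphic quasi-Codazzi structures.) -/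

import Mathlib

noncomputable section

open Set

/-- ℝⁿ. -/
abbrev Vn (n : ℕ) : Type := Fin n → ℝ

/-- Pairings (fiber metrics pairing `E⁺` with `E⁻`) on the trivialized bundle. -/
abbrev Pairn (n : ℕ) : Type := Vn n →L[ℝ] Vn n →L[ℝ] ℝ

/-- Connection forms on the trivialized bundle. -/
abbrev Connn (n : ℕ) : Type := Vn n →L[ℝ] Vn n →L[ℝ] Vn n

/-- Bundle maps `TU → E±` in the trivialization. -/
abbrev Bdln (n : ℕ) : Type := Vn n →L[ℝ] Vn n

/-- Covariant derivative of the section `ν` along the vector field `X`,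
for the connection with connection form `A`. -/
def cov {n : ℕ} (A : Vn n → Connn n) (X ν : Vn n → Vn n) (x : Vn n) : Vn n :=
  fderiv ℝ ν x (X x) + A x (X x) (ν x)

/-- Lie bracket of vector fields on an open set of ℝⁿ. -/
def lieB {n : ℕ} (X Y : Vn n → Vn n) (x : Vn n) : Vn n :=
  fderiv ℝ Y x (X x) - fderiv ℝ X x (Y x)

/-- The section `Φ±Y : x ↦ Φ± x (Y x)`. -/
def secPhi {n : ℕ} (Φ : Vn n → Bdln n) (Y : Vn n → Vn n) : Vn n → Vn n :=
  fun x => Φ x (Y x)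

/-- The induced (possibly degenerate) metric `h x y z = 2 p x (Φ⁺ x y) (Φ⁻ x z)`. -/
def hmet {n : ℕ} (p : Vn n → Pairn n) (Φp Φm : Vn n → Bdln n) (x y z : Vn n) : ℝ :=
  2 * p x (Φp x y) (Φm x z)

/-- The generalized Amari–Chentsov cubic tensor. -/
def Ctensor {n : ℕ} (p : Vn n → Pairn n) (Ap Am : Vn n → Connn n)
    (Φp Φm : Vn n → Bdln n) (X Y Z : Vn n → Vn n) (x : Vn n) : ℝ :=
  -2 * (p x (cov Ap X (secPhi Φp Y) x) (Φm x (Z x))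
        - p x (Φp x (Z x)) (cov Am X (secPhi Φm Y) x))

/-- The relative torsion `T(X,Y) = ∇_X(ΦY) − ∇_Y(ΦX) − Φ[X,Y]`. -/
def Ttor {n : ℕ} (A : Vn n → Connn n) (Φ : Vn n → Bdln n)
    (X Y : Vn n → Vn n) (x : Vn n) : Vn n :=
  cov A X (secPhi Φ Y) x - cov A Y (secPhi Φ X) x - Φ x (lieB X Y x)

/-- The Kossowski pseudo-connection. -/
def Koss {n : ℕ} (p : Vn n → Pairn n) (Φp Φm : Vn n → Bdln n)
    (X Y Z : Vn n → Vn n) (x : Vn n) : ℝ :=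
  fderiv ℝ (fun y => p y (Φp y (Y y)) (Φm y (Z y))) x (X x)
  + fderiv ℝ (fun y => p y (Φp y (Z y)) (Φm y (X y))) x (Y x)
  - fderiv ℝ (fun y => p y (Φp y (X y)) (Φm y (Y y))) x (Z x)
  - p x (Φp x (X x)) (Φm x (lieB Y Z x))
  + p x (Φp x (Y x)) (Φm x (lieB Z X x))
  + p x (Φp x (Z x)) (Φm x (lieB X Y x))

/-- The curvature of a connection form `A` at `x` in directions `v`, `w`. -/
def curvA {n : ℕ} (A : Vn n → Connn n) (x v w : Vn n) : Vn n →L[ℝ] Vn n :=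
  fderiv ℝ A x v w - fderiv ℝ A x w v + (A x v).comp (A x w) - (A x w).comp (A x v)


/-! Along constant vector fields `v`, `w` the curvature is the commutator `∇_v ∇_w − ∇_w ∇_v`
of covariant derivatives, because the second derivatives of the section cancel by symmetry.
Hence a map intertwining the covariant derivatives intertwines the curvatures, and `h` and `C`,
being built from `p`, `Φ±` and `∇±` alone, are transported unchanged by `(F⁺, F⁻)`. -/

section QuasiCodazziIsomorphism

variable {n : ℕ}

lemma cov_congr_of_eventuallyEq {A : Vn n → Connn n} {X ν μ : Vn n → Vn n} {x : Vn n}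
    (h : ν =ᶠ[nhds x] μ) : cov A X ν x = cov A X μ x := by
  rw [cov, cov, h.fderiv_eq, h.eq_of_nhds]

lemma cov_const_const (A : Vn n → Connn n) (w a : Vn n) :
    cov A (fun _ => w) (fun _ => a) = fun y => A y w a := by
  funext y
  simp [cov]

lemma fderiv_cov_const {A : Vn n → Connn n} {ν : Vn n → Vn n} {x : Vn n}
    (hA : DifferentiableAt ℝ A x) (hν : DifferentiableAt ℝ ν x)
    (hDν : DifferentiableAt ℝ (fderiv ℝ ν) x) (v w : Vn n) :
    fderiv ℝ (cov A (fun _ => w) ν) x v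
      = fderiv ℝ (fderiv ℝ ν) x v w + fderiv ℝ A x v w (ν x) + A x w (fderiv ℝ ν x v) := by
  have h := (hDν.hasFDerivAt.clm_apply (hasFDerivAt_const w x)).add
    ((hA.hasFDerivAt.clm_apply (hasFDerivAt_const w x)).clm_apply hν.hasFDerivAt)
  rw [show cov A (fun _ => w) ν = (fun y => fderiv ℝ ν y w) + (fun y => A y w (ν y)) from rfl,
    h.fderiv]
  simp only [add_apply, ContinuousLinearMap.comp_apply,
    ContinuousLinearMap.flip_apply, zero_apply, map_zero, zero_add]
  abel

lemma cov_const_cov_const_sub_swap {A : Vn n → Connn n} {ν : Vn n → Vn n} {x : Vn n}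
    (hA : DifferentiableAt ℝ A x) (hν : ContDiffAt ℝ 2 ν x) (v w : Vn n) :
    cov A (fun _ => v) (cov A (fun _ => w) ν) x - cov A (fun _ => w) (cov A (fun _ => v) ν) x
      = curvA A x v w (ν x) := by
  have hνd : DifferentiableAt ℝ ν x := hν.differentiableAt (by norm_num)
  have hDνd : DifferentiableAt ℝ (fderiv ℝ ν) x :=
    (hν.fderiv_right (m := 1) (by norm_num)).differentiableAt (by norm_num)
  have hsymm := (hν.isSymmSndFDerivAt (by simp)).eq v w
  simp only [cov, fderiv_cov_const hA hνd hDνd, curvA, hsymm, sub_apply, add_apply,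
    ContinuousLinearMap.comp_apply, map_add]
  abel

def IntertwinesCov (U : Set (Vn n)) (A₁ A₂ : Vn n → Connn n) (F : Vn n → Bdln n) : Prop :=
  ∀ ν X : Vn n → Vn n, ContDiffOn ℝ (⊤ : ℕ∞) ν U → ContDiffOn ℝ (⊤ : ℕ∞) X U →
    ∀ x ∈ U, F x (cov A₁ X ν x) = cov A₂ X (fun y => F y (ν y)) x

section Intertwining

variable {U : Set (Vn n)} {A₁ A₂ : Vn n → Connn n} {F : Vn n → Bdln n}

lemma IntertwinesCov.apply_cov_eq_of_eqOn (hF : IntertwinesCov U A₁ A₂ F) (hU : IsOpen U)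
    {ν μ X : Vn n → Vn n} (hν : ContDiffOn ℝ (⊤ : ℕ∞) ν U) (hX : ContDiffOn ℝ (⊤ : ℕ∞) X U)
    (hνμ : EqOn (fun y => F y (ν y)) μ U) {x : Vn n} (hx : x ∈ U) :
    F x (cov A₁ X ν x) = cov A₂ X μ x :=
  (hF ν X hν hX x hx).trans
    (cov_congr_of_eventuallyEq (Filter.eventuallyEq_of_mem (hU.mem_nhds hx) hνμ))

lemma IntertwinesCov.apply_curvA (hF : IntertwinesCov U A₁ A₂ F) (hU : IsOpen U)
    (hA₁ : ContDiffOn ℝ (⊤ : ℕ∞) A₁ U) (hA₂ : ContDiffOn ℝ (⊤ : ℕ∞) A₂ U)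
    (hFs : ContDiffOn ℝ (⊤ : ℕ∞) F U) {x : Vn n} (hx : x ∈ U) (v w a : Vn n) :
    F x (curvA A₁ x v w a) = curvA A₂ x v w (F x a) := by
  have hdiff {A : Vn n → Connn n} (hA : ContDiffOn ℝ (⊤ : ℕ∞) A U) : DifferentiableAt ℝ A x :=
    (hA.contDiffAt (hU.mem_nhds hx)).differentiableAt (by simp)
  have hFa : ContDiffOn ℝ (⊤ : ℕ∞) (fun y => F y a) U := hFs.clm_apply contDiffOn_const
  have hcov_const (u : Vn n) :
      EqOn (fun y => F y (cov A₁ (fun _ => u) (fun _ => a) y))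
        (cov A₂ (fun _ => u) (fun y => F y a)) U :=
    fun y hy => hF _ _ contDiffOn_const contDiffOn_const y hy
  have hcov_cov (u u' : Vn n) :
      F x (cov A₁ (fun _ => u) (cov A₁ (fun _ => u') (fun _ => a)) x)
        = cov A₂ (fun _ => u) (cov A₂ (fun _ => u') (fun y => F y a)) x := by
    refine hF.apply_cov_eq_of_eqOn hU ?_ contDiffOn_const (hcov_const u') hx
    rw [cov_const_const]
    exact (hA₁.clm_apply contDiffOn_const).clm_apply contDiffOn_const
  rw [← cov_const_cov_const_sub_swap (hdiff hA₁) contDiffAt_const,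
    ← cov_const_cov_const_sub_swap (hdiff hA₂)
      ((hFa.contDiffAt (hU.mem_nhds hx)).of_le (by decide)),
    map_sub, hcov_cov, hcov_cov]

end Intertwining

section Invariants

variable {U : Set (Vn n)} {p₁ p₂ : Vn n → Pairn n} {A₁p A₁m A₂p A₂m : Vn n → Connn n}
  {Φ₁p Φ₁m Φ₂p Φ₂m Fp Fm : Vn n → Bdln n}

lemma hmet_eq_of_pair_eq {x : Vn n} (hpair : ∀ a b, p₁ x a b = p₂ x (Fp x a) (Fm x b))
    (hΦp : ∀ v, Fp x (Φ₁p x v) = Φ₂p x v) (hΦm : ∀ v, Fm x (Φ₁m x v) = Φ₂m x v) (y z : Vn n) :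
    hmet p₁ Φ₁p Φ₁m x y z = hmet p₂ Φ₂p Φ₂m x y z := by
  rw [hmet, hmet, hpair, hΦp, hΦm]

lemma Ctensor_eq_of_intertwinesCov (hU : IsOpen U)
    (hΦ₁p : ContDiffOn ℝ (⊤ : ℕ∞) Φ₁p U) (hΦ₁m : ContDiffOn ℝ (⊤ : ℕ∞) Φ₁m U)
    (hΦp : ∀ x ∈ U, ∀ v, Fp x (Φ₁p x v) = Φ₂p x v) (hΦm : ∀ x ∈ U, ∀ v, Fm x (Φ₁m x v) = Φ₂m x v)
    (hpair : ∀ x ∈ U, ∀ a b, p₁ x a b = p₂ x (Fp x a) (Fm x b))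
    (hcovp : IntertwinesCov U A₁p A₂p Fp) (hcovm : IntertwinesCov U A₁m A₂m Fm)
    {X Y : Vn n → Vn n} (hX : ContDiffOn ℝ (⊤ : ℕ∞) X U) (hY : ContDiffOn ℝ (⊤ : ℕ∞) Y U)
    (Z : Vn n → Vn n) {x : Vn n} (hx : x ∈ U) :
    Ctensor p₁ A₁p A₁m Φ₁p Φ₁m X Y Z x = Ctensor p₂ A₂p A₂m Φ₂p Φ₂m X Y Z x := by
  have hp : Fp x (cov A₁p X (secPhi Φ₁p Y) x) = cov A₂p X (secPhi Φ₂p Y) x :=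
    hcovp.apply_cov_eq_of_eqOn hU (hΦ₁p.clm_apply hY) hX (fun y hy => hΦp y hy (Y y)) hx
  have hm : Fm x (cov A₁m X (secPhi Φ₁m Y) x) = cov A₂m X (secPhi Φ₂m Y) x :=
    hcovm.apply_cov_eq_of_eqOn hU (hΦ₁m.clm_apply hY) hX (fun y hy => hΦm y hy (Y y)) hx
  rw [Ctensor, Ctensor, hpair x hx, hpair x hx, hp, hm, hΦp x hx, hΦm x hx]

end Invariants

end QuasiCodazziIsomorphism

theorem statement16_general {n : ℕ} (U : Set (Vn n)) (hUopen : IsOpen U)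
    -- first coordinate quasi-Codazzi setup
    (p₁ : Vn n → Pairn n)
    (A₁p A₁m : Vn n → Connn n)
    (hA₁psmooth : ContDiffOn ℝ (⊤ : ℕ∞) A₁p U) (hA₁msmooth : ContDiffOn ℝ (⊤ : ℕ∞) A₁m U)
    (Φ₁p Φ₁m : Vn n → Bdln n)
    (hΦ₁psmooth : ContDiffOn ℝ (⊤ : ℕ∞) Φ₁p U) (hΦ₁msmooth : ContDiffOn ℝ (⊤ : ℕ∞) Φ₁m U)
    -- second coordinate quasi-Codazzi setup
    (p₂ : Vn n → Pairn n)
    (A₂p A₂m : Vn n → Connn n)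
    (hA₂psmooth : ContDiffOn ℝ (⊤ : ℕ∞) A₂p U) (hA₂msmooth : ContDiffOn ℝ (⊤ : ℕ∞) A₂m U)
    (Φ₂p Φ₂m : Vn n → Bdln n)
    -- the isomorphism (F⁺, F⁻)
    (Fp Fm : Vn n → Bdln n)
    (hFpsmooth : ContDiffOn ℝ (⊤ : ℕ∞) Fp U) (hFmsmooth : ContDiffOn ℝ (⊤ : ℕ∞) Fm U)
    -- (i) F± ∘ Φ₁± = Φ₂±
    (hFΦp : ∀ x ∈ U, ∀ v : Vn n, Fp x (Φ₁p x v) = Φ₂p x v)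
    (hFΦm : ∀ x ∈ U, ∀ v : Vn n, Fm x (Φ₁m x v) = Φ₂m x v)
    -- (ii) p₁ = p₂ ∘ (F⁺ × F⁻)
    (hFpair : ∀ x ∈ U, ∀ a b : Vn n, p₁ x a b = p₂ x (Fp x a) (Fm x b))
    -- (iii) F± intertwines the covariant derivatives
    (hFcovp : ∀ ν X : Vn n → Vn n,
      ContDiffOn ℝ (⊤ : ℕ∞) ν U → ContDiffOn ℝ (⊤ : ℕ∞) X U →
      ∀ x ∈ U, Fp x (cov A₁p X ν x) = cov A₂p X (fun y => Fp y (ν y)) x)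
    (hFcovm : ∀ ν X : Vn n → Vn n,
      ContDiffOn ℝ (⊤ : ℕ∞) ν U → ContDiffOn ℝ (⊤ : ℕ∞) X U →
      ∀ x ∈ U, Fm x (cov A₁m X ν x) = cov A₂m X (fun y => Fm y (ν y)) x) :
    -- (1) F± intertwines the curvatures
    (∀ x ∈ U, ∀ v w a : Vn n,
      Fp x (curvA A₁p x v w a) = curvA A₂p x v w (Fp x a) ∧
      Fm x (curvA A₁m x v w a) = curvA A₂m x v w (Fm x a)) ∧
    -- (2) the induced metrics agree
    (∀ x ∈ U, ∀ y z : Vn n, hmet p₁ Φ₁p Φ₁m x y z = hmet p₂ Φ₂p Φ₂m x y z) ∧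
    -- (3) the generalized cubic tensors agree
    (∀ X Y Z : Vn n → Vn n,
      ContDiffOn ℝ (⊤ : ℕ∞) X U → ContDiffOn ℝ (⊤ : ℕ∞) Y U → ContDiffOn ℝ (⊤ : ℕ∞) Z U →
      ∀ x ∈ U,
        Ctensor p₁ A₁p A₁m Φ₁p Φ₁m X Y Z x = Ctensor p₂ A₂p A₂m Φ₂p Φ₂m X Y Z x) := by
  refine ⟨fun x hx v w a => ⟨?_, ?_⟩, fun x hx => ?_, fun X Y Z hX hY _ x hx => ?_⟩
  · exact IntertwinesCov.apply_curvA hFcovp hUopen hA₁psmooth hA₂psmooth hFpsmooth hx v w a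
  · exact IntertwinesCov.apply_curvA hFcovm hUopen hA₁msmooth hA₂msmooth hFmsmooth hx v w a
  · exact hmet_eq_of_pair_eq (hFpair x hx) (hFΦp x hx) (hFΦm x hx)
  · exact Ctensor_eq_of_intertwinesCov hUopen hΦ₁psmooth hΦ₁msmooth hFΦp hFΦm hFpair hFcovp hFcovm
      hX hY Z hx

/-- Paper's Proposition 3.24 (in a trivialization): if two coordinate quasi-Codazzi
setups on `U` are isomorphic via pointwise invertible smooth maps `F⁺`, `F⁻`
(intertwining the bundle maps, the pairings and the connections), then:
(1) `F±` intertwines the curvatures, (2) the induced metrics agree, and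
(3) the generalized cubic tensors agree. -/
theorem statement16 {n : ℕ} (U : Set (Vn n)) (hUopen : IsOpen U)
    -- first coordinate quasi-Codazzi setup
    (p₁ : Vn n → Pairn n) (hp₁smooth : ContDiffOn ℝ (⊤ : ℕ∞) p₁ U)
    (A₁p A₁m : Vn n → Connn n)
    (hA₁psmooth : ContDiffOn ℝ (⊤ : ℕ∞) A₁p U) (hA₁msmooth : ContDiffOn ℝ (⊤ : ℕ∞) A₁m U)
    (hdual₁ : ∀ x ∈ U, ∀ v a b : Vn n,
      fderiv ℝ p₁ x v a b = p₁ x (A₁p x v a) b + p₁ x a (A₁m x v b))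
    (Φ₁p Φ₁m : Vn n → Bdln n)
    (hΦ₁psmooth : ContDiffOn ℝ (⊤ : ℕ∞) Φ₁p U) (hΦ₁msmooth : ContDiffOn ℝ (⊤ : ℕ∞) Φ₁m U)
    (hLag₁ : ∀ x ∈ U, ∀ y z : Vn n, p₁ x (Φ₁p x y) (Φ₁m x z) = p₁ x (Φ₁p x z) (Φ₁m x y))
    -- second coordinate quasi-Codazzi setup
    (p₂ : Vn n → Pairn n) (hp₂smooth : ContDiffOn ℝ (⊤ : ℕ∞) p₂ U)
    (A₂p A₂m : Vn n → Connn n)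
    (hA₂psmooth : ContDiffOn ℝ (⊤ : ℕ∞) A₂p U) (hA₂msmooth : ContDiffOn ℝ (⊤ : ℕ∞) A₂m U)
    (hdual₂ : ∀ x ∈ U, ∀ v a b : Vn n,
      fderiv ℝ p₂ x v a b = p₂ x (A₂p x v a) b + p₂ x a (A₂m x v b))
    (Φ₂p Φ₂m : Vn n → Bdln n)
    (hΦ₂psmooth : ContDiffOn ℝ (⊤ : ℕ∞) Φ₂p U) (hΦ₂msmooth : ContDiffOn ℝ (⊤ : ℕ∞) Φ₂m U)
    (hLag₂ : ∀ x ∈ U, ∀ y z : Vn n, p₂ x (Φ₂p x y) (Φ₂m x z) = p₂ x (Φ₂p x z) (Φ₂m x y))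
    -- the isomorphism (F⁺, F⁻)
    (Fp Fm : Vn n → Bdln n)
    (hFpsmooth : ContDiffOn ℝ (⊤ : ℕ∞) Fp U) (hFmsmooth : ContDiffOn ℝ (⊤ : ℕ∞) Fm U)
    (hFpbij : ∀ x ∈ U, Function.Bijective (Fp x))
    (hFmbij : ∀ x ∈ U, Function.Bijective (Fm x))
    -- (i) F± ∘ Φ₁± = Φ₂±
    (hFΦp : ∀ x ∈ U, ∀ v : Vn n, Fp x (Φ₁p x v) = Φ₂p x v)
    (hFΦm : ∀ x ∈ U, ∀ v : Vn n, Fm x (Φ₁m x v) = Φ₂m x v)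
    -- (ii) p₁ = p₂ ∘ (F⁺ × F⁻)
    (hFpair : ∀ x ∈ U, ∀ a b : Vn n, p₁ x a b = p₂ x (Fp x a) (Fm x b))
    -- (iii) F± intertwines the covariant derivatives
    (hFcovp : ∀ ν X : Vn n → Vn n,
      ContDiffOn ℝ (⊤ : ℕ∞) ν U → ContDiffOn ℝ (⊤ : ℕ∞) X U →
      ∀ x ∈ U, Fp x (cov A₁p X ν x) = cov A₂p X (fun y => Fp y (ν y)) x)
    (hFcovm : ∀ ν X : Vn n → Vn n,
      ContDiffOn ℝ (⊤ : ℕ∞) ν U → ContDiffOn ℝ (⊤ : ℕ∞) X U →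
      ∀ x ∈ U, Fm x (cov A₁m X ν x) = cov A₂m X (fun y => Fm y (ν y)) x) :
    -- (1) F± intertwines the curvatures
    (∀ x ∈ U, ∀ v w a : Vn n,
      Fp x (curvA A₁p x v w a) = curvA A₂p x v w (Fp x a) ∧
      Fm x (curvA A₁m x v w a) = curvA A₂m x v w (Fm x a)) ∧
    -- (2) the induced metrics agree
    (∀ x ∈ U, ∀ y z : Vn n, hmet p₁ Φ₁p Φ₁m x y z = hmet p₂ Φ₂p Φ₂m x y z) ∧
    -- (3) the generalized cubic tensors agree
    (∀ X Y Z : Vn n → Vn n,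
      ContDiffOn ℝ (⊤ : ℕ∞) X U → ContDiffOn ℝ (⊤ : ℕ∞) Y U → ContDiffOn ℝ (⊤ : ℕ∞) Z U →
      ∀ x ∈ U,
        Ctensor p₁ A₁p A₁m Φ₁p Φ₁m X Y Z x = Ctensor p₂ A₂p A₂m Φ₂p Φ₂m X Y Z x) :=
  statement16_general U hUopen p₁ A₁p A₁m hA₁psmooth hA₁msmooth Φ₁p Φ₁m hΦ₁psmooth hΦ₁msmooth p₂ A₂p
    A₂m hA₂psmooth hA₂msmooth Φ₂p Φ₂m Fp Fm hFpsmooth hFmsmooth hFΦp hFΦm hFpair hFcovp hFcovm
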